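/- The product set [0,1] × G^(2) is contained in F^(3), where G^(2) ⊆ [0,1]^2 is the boundary-frame generalized Sierpiński carpet of the two-dimensional construction. -/

import Mathlib

open Set MeasureTheory Filter
open scoped Classical

noncomputable section

/-- Points of `ℝ^d` with the Euclidean metric. -/
abbrev Pt (d : ℕ) := EuclideanSpace ℝ (Fin d)

/-- The closed cube `∏ [(lᵢ-1)/5ⁿ, lᵢ/5ⁿ]`. -/
def cube (d n : ℕ) (l : Fin d → ℕ) : Set (Pt d) :=
  {x | ∀ i, ((l i : ℝ) - 1) / 5 ^ n ≤ x i ∧ x i ≤ (l i : ℝ) / 5 ^ n}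

/-- The collection `𝒬ₙ⁽ᵈ⁾` of level-`n` cubes. -/
def Qcol (d n : ℕ) : Set (Set (Pt d)) :=
  {Q | ∃ l : Fin d → ℕ, (∀ i, 1 ≤ l i ∧ l i ≤ 5 ^ n) ∧ Q = cube d n l}

/-- `𝒬ₙ⁽ᵈ⁾(A)`: the level-`n` cubes whose interior meets `A`. -/
def QcolOf (d n : ℕ) (A : Set (Pt d)) : Set (Set (Pt d)) :=
  {Q | Q ∈ Qcol d n ∧ (interior Q ∩ A).Nonempty}

/-- `F₀⁽ᵈ⁾ = [0,1]^d`. -/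
def F0 (d : ℕ) : Set (Pt d) := {x | ∀ i, x i ∈ Icc (0 : ℝ) 1}

/-- `F₁⁽ᵈ⁾`. -/
def F1 (d : ℕ) : Set (Pt d) :=
  F0 d \ ⋃ i : Fin d, {x | (∀ j, j < i → x j ∈ Ioo (2/5 : ℝ) (3/5)) ∧
    x i ∈ Ioo (1/5 : ℝ) (2/5) ∪ Ioo (3/5 : ℝ) (4/5) ∧
    ∀ j, i < j → x j ∈ Ioo (2/5 : ℝ) (3/5)}

/-- The orientation-preserving affine map from `[0,1]^d` onto the cube indexed by `l` at
level `n`. -/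
def psi (d n : ℕ) (l : Fin d → ℕ) (x : Pt d) : Pt d :=
  WithLp.toLp 2 (fun i => ((l i : ℝ) - 1) / 5 ^ n + x i / 5 ^ n)

/-- The approximations `Fₙ⁽ᵈ⁾`. -/
def Fn (d : ℕ) : ℕ → Set (Pt d)
  | 0 => F0 d
  | 1 => F1 d
  | n + 2 => ⋃ l ∈ {l : Fin d → ℕ | cube d 1 l ∈ QcolOf d 1 (F1 d)}, psi d 1 l '' Fn d (n + 1)

/-- The fractal `F⁽ᵈ⁾`. -/
def Fset (d : ℕ) : Set (Pt d) := ⋂ n, Fn d n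

/-- `G₁⁽ᵈ⁾`: union of the level-1 cubes of `F₁⁽ᵈ⁾` which meet the boundary of `[0,1]^d`. -/
def G1 (d : ℕ) : Set (Pt d) :=
  ⋃ Q ∈ {Q | Q ∈ QcolOf d 1 (F1 d) ∧ (Q ∩ frontier (F0 d)).Nonempty}, Q

/-- The approximations `Gₙ⁽ᵈ⁾`. -/
def Gn (d : ℕ) : ℕ → Set (Pt d)
  | 0 => F0 d
  | 1 => G1 d
  | n + 2 => ⋃ l ∈ {l : Fin d → ℕ | cube d 1 l ∈ QcolOf d 1 (G1 d)}, psi d 1 l '' Gn d (n + 1)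

/-- The boundary fractal `G⁽ᵈ⁾ = [0,1]^d ∩ ⋂_{n ≥ 1} Gₙ⁽ᵈ⁾`. -/
def Gset (d : ℕ) : Set (Pt d) := F0 d ∩ ⋂ n, ⋂ (_ : 1 ≤ n), Gn d n

/-- The discrete `p`-energy `𝓔ₚⁿ(f)` on the level-`n` cubes of `F⁽ᵈ⁾`. -/
def energy (d n : ℕ) (p : ℝ) (f : Set (Pt d) → ℝ) : ℝ :=
  (1 / 2) * ∑' Q : QcolOf d n (Fset d), ∑' Q' : QcolOf d n (Fset d),
    if ((Q : Set (Pt d)) ∩ (Q' : Set (Pt d))).Nonempty then |f Q - f Q'| ^ p else 0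

/-- `Sᵐ(A)`: level-`(n+m)` cubes of `F⁽ᵈ⁾` contained in some cube of `A`. -/
def Sm (d n m : ℕ) (A : Set (Set (Pt d))) : Set (Set (Pt d)) :=
  {Q | Q ∈ QcolOf d (n + m) (Fset d) ∧ ∃ Q' ∈ A, Q ⊆ Q'}

/-- The effective `p`-conductance `𝓔_{p,m}(A₁, A₂)`. -/
def conduct (d n m : ℕ) (p : ℝ) (A₁ A₂ : Set (Set (Pt d))) : ℝ :=
  sInf {e : ℝ | ∃ f : Set (Pt d) → ℝ,
    (∀ Q ∈ Sm d n m A₁, f Q = 1) ∧ (∀ Q ∈ Sm d n m A₂, f Q = 0) ∧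
    e = energy d (n + m) p f}

/-- `Γ(Q)`: level-`n` cubes of `F⁽ᵈ⁾` meeting `Q`. -/
def Gam (d n : ℕ) (Q : Set (Pt d)) : Set (Set (Pt d)) :=
  {Q' | Q' ∈ QcolOf d n (Fset d) ∧ (Q' ∩ Q).Nonempty}

/-- `Γ(Q)ᶜ = 𝒬ₙ⁽ᵈ⁾(F⁽ᵈ⁾) \ Γ(Q)`. -/
def GamC (d n : ℕ) (Q : Set (Pt d)) : Set (Set (Pt d)) :=
  QcolOf d n (Fset d) \ Gam d n Q

/-- The corner cube `[0, 1/5]^d`. -/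
def Qone (d : ℕ) : Set (Pt d) := {x | ∀ i, x i ∈ Icc (0 : ℝ) (1/5)}

/-- The center cube `[2/5, 3/5]^d`. -/
def Qtwo (d : ℕ) : Set (Pt d) := {x | ∀ i, x i ∈ Icc (2/5 : ℝ) (3/5)}

end

/-!
Every level-1 cube of `G₁⁽ᵈ⁾` touches `∂[0,1]^d`, so `G₁⁽ᵈ⁾` lies in the outer layer of `[0,1]^d`
where some coordinate is `≤ 1/5` or `≥ 4/5`. A point of `[0,1] × (outer layer of [0,1]^d)` is in
the outer layer of `[0,1]^(d+1)`, which misses the tunnels removed from `F₁⁽ᵈ⁺¹⁾` since these lie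
in `(1/5,4/5)^(d+1)`. So the cube of `[0,1]^(d+1)` over a cube of `G₁⁽ᵈ⁾`, in any of the five slabs
of the first coordinate, is a cube of `F₁⁽ᵈ⁺¹⁾`; choosing the slab of the first coordinate at each
level gives `[0,1] × Gₙ⁽ᵈ⁾ ⊆ Fₙ⁽ᵈ⁺¹⁾` by induction on `n`.
-/

open Set

theorem interior_setOf_forall_mem_Icc {ι : Type*} [Fintype ι] (a b : ι → ℝ) :
    interior {x : EuclideanSpace ℝ ι | ∀ i, x i ∈ Icc (a i) (b i)} =
      {x | ∀ i, x i ∈ Ioo (a i) (b i)} := by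
  have h : {x : EuclideanSpace ℝ ι | ∀ i, x i ∈ Icc (a i) (b i)} =
      ⋂ i, (fun x : EuclideanSpace ℝ ι => x i) ⁻¹' Icc (a i) (b i) := by
    ext; simp
  rw [h, interior_iInter_of_finite]
  simp only [← (PiLp.isOpenMap_apply 2 _ _).preimage_interior_eq_interior_preimage
    (PiLp.continuous_apply 2 _ _), interior_Icc]
  ext; simp

theorem mem_interior_cube {d n : ℕ} {l : Fin d → ℕ} {x : Pt d} :
    x ∈ interior (cube d n l) ↔ ∀ i, x i ∈ Ioo (((l i : ℝ) - 1) / 5 ^ n) ((l i : ℝ) / 5 ^ n) := by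
  change x ∈ interior {x : Pt d | ∀ i, x i ∈ Icc _ _} ↔ _
  rw [interior_setOf_forall_mem_Icc]
  rfl

theorem exists_coord_le_zero_or_one_le_of_mem_frontier_F0 {d : ℕ} {x : Pt d}
    (hx : x ∈ frontier (F0 d)) : ∃ i, x i ≤ 0 ∨ 1 ≤ x i := by
  have hint : x ∉ interior (F0 d) := hx.2
  rw [F0, interior_setOf_forall_mem_Icc] at hint
  simpa only [mem_ofPred_eq, mem_Ioo, not_forall, not_and_or, not_lt] using hint

theorem cube_mem_QcolOf {d n : ℕ} {l : Fin d → ℕ} {A : Set (Pt d)}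
    (hA : (interior (cube d n l) ∩ A).Nonempty) (hAF0 : A ⊆ F0 d) : cube d n l ∈ QcolOf d n A := by
  obtain ⟨x, hxl, hxA⟩ := hA
  refine ⟨⟨l, fun i => ?_, rfl⟩, x, hxl, hxA⟩
  have hpos : (0 : ℝ) < 5 ^ n := by positivity
  obtain ⟨hlo, hhi⟩ := mem_interior_cube.1 hxl i
  obtain ⟨h0, h1⟩ := hAF0 hxA i
  rw [div_lt_iff₀ hpos] at hlo
  rw [lt_div_iff₀ hpos] at hhi
  have hl1 : (0 : ℝ) < l i := by nlinarith
  have hl5 : (l i : ℝ) < 5 ^ n + 1 := by nlinarith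
  constructor
  · exact_mod_cast hl1
  · exact Nat.lt_succ_iff.1 (by exact_mod_cast hl5)

def outerLayer (d : ℕ) : Set (Pt d) := {x | x ∈ F0 d ∧ ∃ i, x i ≤ 1 / 5 ∨ 4 / 5 ≤ x i}

theorem G1_subset_outerLayer (d : ℕ) : G1 d ⊆ outerLayer d := by
  intro y hy
  obtain ⟨Q, ⟨⟨⟨l, hl, rfl⟩, -⟩, z, hzQ, hz⟩, hyQ⟩ := mem_iUnion₂.1 hy
  obtain ⟨i, hi⟩ := exists_coord_le_zero_or_one_le_of_mem_frontier_F0 hz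
  simp only [cube, pow_one, mem_ofPred_eq] at hyQ hzQ
  refine ⟨fun j => ?_, i, ?_⟩
  · have : (1 : ℝ) ≤ l j ∧ (l j : ℝ) ≤ 5 := by exact_mod_cast hl j
    constructor <;> linarith [hyQ j]
  · rcases hi with hi | hi
    · left; linarith [hyQ i, hzQ i]
    · right; linarith [hyQ i, hzQ i]

theorem outerLayer_subset_F1 (d : ℕ) : outerLayer d ⊆ F1 d := by
  rintro x ⟨hx, j, hj⟩
  refine ⟨hx, fun hmem => ?_⟩
  obtain ⟨i, hbefore, hi, hafter⟩ := mem_iUnion.1 hmem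
  have hmid : x j ∈ Ioo (1 / 5 : ℝ) (4 / 5) := by
    rcases lt_trichotomy j i with hji | rfl | hij
    · have := hbefore j hji; exact ⟨by linarith [this.1], by linarith [this.2]⟩
    · rcases hi with h | h <;> exact ⟨by linarith [h.1], by linarith [h.2]⟩
    · have := hafter j hij; exact ⟨by linarith [this.1], by linarith [this.2]⟩
  rcases hj with h | h <;> linarith [hmid.1, hmid.2]

def Pt.cons {d : ℕ} (a : ℝ) (y : Pt d) : Pt (d + 1) := WithLp.toLp 2 (Fin.cons a y.ofLp)

@[simp]
theorem Pt.cons_zero {d : ℕ} (a : ℝ) (y : Pt d) : Pt.cons a y 0 = a := rfl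

@[simp]
theorem Pt.cons_succ {d : ℕ} (a : ℝ) (y : Pt d) (j : Fin d) : Pt.cons a y j.succ = y j := rfl

theorem Pt.cons_self_tail {d : ℕ} (x : Pt (d + 1)) :
    Pt.cons (x 0) (WithLp.toLp 2 fun j => x j.succ) = x := by
  ext i
  exact Fin.cases rfl (fun _ => rfl) i

theorem Pt.cons_mem_F0 {d : ℕ} {a : ℝ} {y : Pt d} (ha : a ∈ Icc 0 1) (hy : y ∈ F0 d) :
    Pt.cons a y ∈ F0 (d + 1) :=
  Fin.cases ha hy

theorem Pt.cons_mem_outerLayer {d : ℕ} {a : ℝ} {y : Pt d} (ha : a ∈ Icc 0 1)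
    (hy : y ∈ outerLayer d) : Pt.cons a y ∈ outerLayer (d + 1) :=
  let ⟨hyF0, j, hj⟩ := hy
  ⟨Pt.cons_mem_F0 ha hyF0, j.succ, hj⟩

theorem psi_cons {d n : ℕ} (k : ℕ) (l : Fin d → ℕ) (a : ℝ) (y : Pt d) :
    psi (d + 1) n (Fin.cons k l) (Pt.cons a y) =
      Pt.cons (((k : ℝ) - 1) / 5 ^ n + a / 5 ^ n) (psi d n l y) := by
  ext i
  exact Fin.cases rfl (fun _ => rfl) i

theorem exists_nat_sub_one_le_mul_le {N : ℕ} (hN : 1 ≤ N) {t : ℝ} (ht : t ∈ Icc (0 : ℝ) 1) :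
    ∃ k : ℕ, 1 ≤ k ∧ k ≤ N ∧ (k : ℝ) - 1 ≤ N * t ∧ N * t ≤ k := by
  obtain ⟨ht0, ht1⟩ := ht
  have hNt : (0 : ℝ) ≤ N * t := by positivity
  refine ⟨max 1 ⌈(N : ℝ) * t⌉₊, le_max_left _ _, max_le hN ?_, ?_, ?_⟩
  · exact Nat.ceil_le.2 (by nlinarith [(Nat.one_le_cast (α := ℝ)).2 hN])
  · rcases max_cases 1 ⌈(N : ℝ) * t⌉₊ with ⟨h, -⟩ | ⟨h, -⟩ <;> rw [h]
    · simpa using hNt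
    · linarith [Nat.ceil_lt_add_one hNt]
  · exact (Nat.le_ceil _).trans (by exact_mod_cast le_max_right _ _)

theorem cube_cons_mem_QcolOf_F1 {d : ℕ} {k : ℕ} {l : Fin d → ℕ} (hk : 1 ≤ k ∧ k ≤ 5)
    (hl : cube d 1 l ∈ QcolOf d 1 (G1 d)) :
    cube (d + 1) 1 (Fin.cons k l) ∈ QcolOf (d + 1) 1 (F1 (d + 1)) := by
  obtain ⟨-, y, hyl, hyG⟩ := hl
  have hk' : (1 : ℝ) ≤ k ∧ (k : ℝ) ≤ 5 := by exact_mod_cast hk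
  refine cube_mem_QcolOf ⟨Pt.cons ((2 * k - 1) / 10) y, ?_, ?_⟩ sdiff_subset
  · refine mem_interior_cube.2 (Fin.cases ?_ fun j => ?_)
    · simp only [Pt.cons_zero, Fin.cons_zero, pow_one, mem_Ioo]
      constructor <;> linarith
    · simpa using mem_interior_cube.1 hyl j
  · refine outerLayer_subset_F1 _ (Pt.cons_mem_outerLayer ?_ (G1_subset_outerLayer d hyG))
    constructor <;> linarith

theorem Pt.cons_mem_Fn_of_mem_Gn {d : ℕ} :
    ∀ n {a : ℝ} {y : Pt d}, a ∈ Icc 0 1 → y ∈ Gn d n → Pt.cons a y ∈ Fn (d + 1) n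
  | 0, _, _, ha, hy => Pt.cons_mem_F0 ha hy
  | 1, _, _, ha, hy => outerLayer_subset_F1 _ (Pt.cons_mem_outerLayer ha (G1_subset_outerLayer d hy))
  | n + 2, a, _, ha, hy => by
    obtain ⟨l, hl, z, hz, rfl⟩ := mem_iUnion₂.1 hy
    obtain ⟨k, hk1, hk5, hka⟩ := exists_nat_sub_one_le_mul_le (N := 5) (by norm_num) ha
    refine mem_iUnion₂.2 ⟨Fin.cons k l, cube_cons_mem_QcolOf_F1 ⟨hk1, hk5⟩ hl,
      Pt.cons (5 * a - (k - 1)) z, Pt.cons_mem_Fn_of_mem_Gn (n + 1) ?_ hz, ?_⟩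
    · push_cast at hka
      constructor <;> linarith
    · rw [psi_cons]
      congr 1
      ring

/-- `[0,1] × G⁽²⁾ ⊆ F⁽³⁾`. -/
theorem statement13 :
    {x : Pt 3 | x 0 ∈ Icc (0 : ℝ) 1 ∧ WithLp.toLp 2 (fun j : Fin 2 => x j.succ) ∈ Gset 2} ⊆ Fset 3 := by
  rintro x ⟨hx0, hxF0, hxG⟩
  refine mem_iInter.2 fun n => ?_
  rw [← Pt.cons_self_tail x]
  refine Pt.cons_mem_Fn_of_mem_Gn n hx0 ?_
  rcases n with _ | n
  · exact hxF0
  · exact mem_iInter₂.1 hxG (n + 1) n.succ_pos
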